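/- arXiv:1912.00016 — 5 statements merged into one kernel-verified Lean document; each statement's English description precedes it below -/
import Mathlib

section
/- For n ≥ 3, the dominated chromatic number of the path P_n equals n/2 if n ≡ 0 (mod 4), and ⌊n/2⌋ + 1 otherwise. -/
open SimpleGraph

/-- A coloring is a dominated coloring if every (nonempty) color class is contained
in the open neighborhood of some vertex. -/
def IsDomColoring {V α : Type*} (G : SimpleGraph V) (C : G.Coloring α) : Prop :=
  ∀ c : α, (∃ u, C u = c) → ∃ v, ∀ u, C u = c → G.Adj v u

/-- The dominated chromatic number of a graph: the least number of colors
in a dominated coloring. -/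
noncomputable def domChromatic {V : Type*} (G : SimpleGraph V) : ℕ :=
  sInf {n | ∃ C : G.Coloring (Fin n), IsDomColoring G C}

private lemma even_sum' {ι : Type*} (s : Finset ι) (f : ι → ℕ)
    (h : ∀ i ∈ s, Even (f i)) : Even (∑ i ∈ s, f i) :=
  Finset.sum_induction f Even (fun _ _ => Even.add) Even.zero h

/-- the target number of colors -/
private def tgt (n : ℕ) : ℕ := if n % 4 = 0 then n / 2 else n / 2 + 1

private lemma colval_lt (n i : ℕ) (hi : i < n) (hn : 3 ≤ n) :
    2 * (i / 4) + i % 2 < tgt n := by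
  unfold tgt
  split <;> omega

private noncomputable def pathCol (n : ℕ) (hn : 3 ≤ n) :
    (pathGraph n).Coloring (Fin (tgt n)) :=
  SimpleGraph.Coloring.mk
    (fun i => ⟨2 * (i.val / 4) + i.val % 2, colval_lt n i.val i.isLt hn⟩)
    (by
      intro u v hadj
      rw [pathGraph_adj] at hadj
      simp only [ne_eq, Fin.mk.injEq]
      omega)

private lemma pathCol_isDom (n : ℕ) (hn : 3 ≤ n) :
    IsDomColoring (pathGraph n) (pathCol n hn) := by
  intro c ⟨u, hu⟩
  set k := c.val with hk
  have hu' : 2 * (u.val / 4) + u.val % 2 = k := congrArg Fin.val hu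
  obtain ⟨a, ha⟩ : ∃ a, (k % 2 = 0 ∧ a = 2 * k) ∨ (k % 2 = 1 ∧ a + 1 = 2 * k) := by
    rcases Nat.mod_two_eq_zero_or_one k with h | h
    · exact ⟨2 * k, Or.inl ⟨h, rfl⟩⟩
    · exact ⟨2 * k - 1, Or.inr ⟨h, by omega⟩⟩
  have hua : u.val = a ∨ u.val = a + 2 := by omega
  have han : a < n := by have := u.isLt; omega
  have hclass : ∀ w : Fin n, pathCol n hn w = c → w.val = a ∨ w.val = a + 2 := by
    intro w hw
    have hw' : 2 * (w.val / 4) + w.val % 2 = k := congrArg Fin.val hw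
    omega
  by_cases hcase : a + 1 < n
  · refine ⟨⟨a + 1, hcase⟩, fun w hw => ?_⟩
    rw [pathGraph_adj]
    simp only [Fin.val_mk]
    rcases hclass w hw with h | h <;> omega
  · have ha1 : 1 ≤ a := by omega
    refine ⟨⟨a - 1, by omega⟩, fun w hw => ?_⟩
    rw [pathGraph_adj]
    simp only [Fin.val_mk]
    have hwlt := w.isLt
    rcases hclass w hw with h | h <;> omega

private lemma fiber_card_le {n m : ℕ} (C : (pathGraph n).Coloring (Fin m))
    (hC : IsDomColoring (pathGraph n) C) (k : Fin m) :
    Finset.card {u : Fin n | C u = k} ≤ 2 := by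
  classical
  by_cases hne : ∃ u, C u = k
  · obtain ⟨v, hv⟩ := hC k hne
    have hsub : ({u : Fin n | C u = k} : Finset (Fin n)).image Fin.val ⊆
        {v.val - 1, v.val + 1} := by
      intro x hx
      simp only [Finset.mem_image, Finset.mem_filter, Finset.mem_univ, true_and] at hx
      obtain ⟨w, hw, rfl⟩ := hx
      have := hv w hw
      rw [pathGraph_adj] at this
      simp only [Finset.mem_insert, Finset.mem_singleton]
      omega
    calc Finset.card {u : Fin n | C u = k}
        = Finset.card (({u : Fin n | C u = k} : Finset (Fin n)).image Fin.val) :=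
          (Finset.card_image_of_injective _ Fin.val_injective).symm
      _ ≤ Finset.card ({v.val - 1, v.val + 1} : Finset ℕ) := Finset.card_le_card hsub
      _ ≤ 2 := le_trans (Finset.card_insert_le _ _) (by simp)
  · push_neg at hne
    have : ({u : Fin n | C u = k} : Finset (Fin n)) = ∅ := by
      ext u; simp [hne u]
    simp [this]

private lemma n_le_two_mul {n m : ℕ} (C : (pathGraph n).Coloring (Fin m))
    (hC : IsDomColoring (pathGraph n) C) : n ≤ 2 * m := by
  classical
  have h1 : (Finset.univ : Finset (Fin n)).card =
      ∑ k : Fin m, Finset.card {u : Fin n | C u = k} :=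
    Finset.card_eq_sum_card_fiberwise (fun x _ => Finset.mem_univ _)
  have h2 : ∑ k : Fin m, Finset.card {u : Fin n | C u = k} ≤ ∑ _k : Fin m, 2 :=
    Finset.sum_le_sum fun k _ => fiber_card_le C hC k
  simp only [Finset.card_univ, Fintype.card_fin, Finset.sum_const, smul_eq_mul] at h1 h2
  omega

theorem domChromatic_pathGraph (n : ℕ) (hn : 3 ≤ n) :
    domChromatic (pathGraph n) = if n % 4 = 0 then n / 2 else n / 2 + 1 := by
  classical
  have hmem : tgt n ∈ {m | ∃ C : (pathGraph n).Coloring (Fin m), IsDomColoring (pathGraph n) C} :=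
    ⟨pathCol n hn, pathCol_isDom n hn⟩
  have hlow : ∀ m ∈ {m | ∃ C : (pathGraph n).Coloring (Fin m), IsDomColoring (pathGraph n) C},
      tgt n ≤ m := by
    rintro m ⟨C, hC⟩
    have hn2m : n ≤ 2 * m := n_le_two_mul C hC
    by_cases h4 : n % 4 = 2
    · -- parity argument
      by_contra hlt
      push_neg at hlt
      unfold tgt at hlt
      rw [if_neg (by omega)] at hlt
      have hm : n = 2 * m := by omega
      have h1 : (Finset.univ : Finset (Fin n)).card =
          ∑ k : Fin m, Finset.card {u : Fin n | C u = k} :=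
        Finset.card_eq_sum_card_fiberwise (fun x _ => Finset.mem_univ _)
      have hfib2 : ∀ k : Fin m, Finset.card {u : Fin n | C u = k} = 2 := by
        by_contra hcon
        push_neg at hcon
        obtain ⟨k, hk⟩ := hcon
        have hklt : Finset.card {u : Fin n | C u = k} < 2 :=
          lt_of_le_of_ne (fiber_card_le C hC k) hk
        have : ∑ j : Fin m, Finset.card {u : Fin n | C u = j} < ∑ _j : Fin m, 2 :=
          Finset.sum_lt_sum (fun j _ => fiber_card_le C hC j)
            ⟨k, Finset.mem_univ k, hklt⟩
        simp only [Finset.card_univ, Fintype.card_fin, Finset.sum_const, smul_eq_mul] at h1 this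
        omega
      have hsum : (∑ u : Fin n, u.val) =
          ∑ k : Fin m, ∑ u ∈ ({u : Fin n | C u = k} : Finset (Fin n)), u.val :=
        (Finset.sum_fiberwise_of_maps_to (fun x _ => Finset.mem_univ (C x)) _).symm
      have heven : Even (∑ u : Fin n, u.val) := by
        rw [hsum]
        apply even_sum'
        intro k _
        obtain ⟨x, y, hxy, hpair⟩ := Finset.card_eq_two.mp (hfib2 k)
        have hxk : C x = k := by
          have : x ∈ ({u : Fin n | C u = k} : Finset (Fin n)) := by rw [hpair]; simp
          simpa using this
        have hyk : C y = k := by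
          have : y ∈ ({u : Fin n | C u = k} : Finset (Fin n)) := by rw [hpair]; simp
          simpa using this
        obtain ⟨v, hv⟩ := hC k ⟨x, hxk⟩
        have hx := hv x hxk
        have hy := hv y hyk
        rw [pathGraph_adj] at hx hy
        have hxyval : x.val ≠ y.val := fun h => hxy (Fin.val_injective h)
        have hsum2 : x.val + y.val = 2 * v.val := by omega
        rw [hpair, Finset.sum_pair hxy, hsum2]
        exact ⟨v.val, by ring⟩
      have htot : (∑ u : Fin n, u.val) = ∑ i ∈ Finset.range n, i :=
        Fin.sum_univ_eq_sum_range (fun i => i) n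
      have htot2 : (∑ u : Fin n, u.val) * 2 = n * (n - 1) := by
        rw [htot]; exact Finset.sum_range_id_mul_two n
      obtain ⟨q, hq⟩ : ∃ q, n = 4 * q + 2 := ⟨n / 4, by omega⟩
      have hprod : n * (n - 1) = ((2 * q + 1) * (4 * q + 1)) * 2 := by
        have h1' : n - 1 = 4 * q + 1 := by omega
        rw [h1', hq]; ring
      have hval : (∑ u : Fin n, u.val) = (2 * q + 1) * (4 * q + 1) := by
        have := htot2
        rw [hprod] at this
        omega
      have hodd : Odd ((2 * q + 1) * (4 * q + 1)) :=
        Odd.mul ⟨q, by ring⟩ ⟨2 * q, by ring⟩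
      rw [hval] at heven
      rw [Nat.even_iff] at heven
      rw [Nat.odd_iff] at hodd
      omega
    · unfold tgt
      split <;> omega
  have key : domChromatic (pathGraph n) = tgt n :=
    le_antisymm (Nat.sInf_le hmem) (le_csInf ⟨_, hmem⟩ hlow)
  rw [key]
  unfold tgt
  rfl
end

section
/- Let G be a connected graph and e = uv an edge of G that is not a bridge. Then χ_dom(G) − 1 ≤ χ_dom(G − e) ≤ χ_dom(G) + 2. -/
open SimpleGraph

/-!
Moving the endpoints of `e = uv` into fresh singleton color classes changes a dominated
coloring of one of `G`, `G - e` into one of the other: every edge where the two graphs differ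
then joins two different colors, the remaining classes keep their dominating vertices
(none of them contains both `u` and `v`), and a singleton class is dominated by any neighbor
of its vertex. From `G - e` to `G` it suffices to isolate `u`, whose neighbor is `v`; from `G`
to `G - e` both endpoints are isolated, and they still have neighbors in `G - e` because `e`
lies on a cycle.
-/

namespace SimpleGraph

variable {V α : Type*}

theorem Reachable.exists_adj_of_ne {G : SimpleGraph V} {u v : V} (h : G.Reachable u v)
    (hne : u ≠ v) : ∃ w, G.Adj u w :=
  let ⟨p⟩ := h
  ⟨_, p.adj_snd (p.not_nil_of_ne hne)⟩

def Coloring.isolate [DecidableEq V] {H : SimpleGraph V} (C : H.Coloring α)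
    (H' : SimpleGraph V) (S : Finset V)
    (hS : ∀ a b, H'.Adj a b → a ∉ S → b ∉ S → H.Adj a b) : H'.Coloring (α ⊕ S) :=
  Coloring.mk (fun y => if hy : y ∈ S then .inr ⟨y, hy⟩ else .inl (C y)) fun {a b} hab => by
    by_cases ha : a ∈ S <;> by_cases hb : b ∈ S <;> simp only [ha, hb, dite_true, dite_false]
    · simpa using hab.ne
    · simp
    · simp
    · simpa using C.valid (hS a b hab ha hb)

theorem Coloring.isolate_apply_of_mem [DecidableEq V] {H H' : SimpleGraph V}
    (C : H.Coloring α) {S : Finset V} (hS) {y : V} (hy : y ∈ S) :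
    C.isolate H' S hS y = .inr ⟨y, hy⟩ :=
  dif_pos hy

theorem Coloring.isolate_apply_of_notMem [DecidableEq V] {H H' : SimpleGraph V}
    (C : H.Coloring α) {S : Finset V} (hS) {y : V} (hy : y ∉ S) :
    C.isolate H' S hS y = .inl (C y) :=
  dif_neg hy

end SimpleGraph

section DomColoring

variable {V W α β : Type*}

theorem IsDomColoring.isolate [DecidableEq V] {H H' : SimpleGraph V} {C : H.Coloring α}
    (hC : IsDomColoring H C) {S : Finset V} (hS : ∀ a b, H'.Adj a b → a ∉ S → b ∉ S → H.Adj a b)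
    (hnbr : ∀ s ∈ S, ∃ w, H'.Adj w s) (hdom : ∀ w y, H.Adj w y → y ∉ S → H'.Adj w y) :
    IsDomColoring H' (C.isolate H' S hS) := by
  rintro (c | ⟨s, hs⟩) ⟨x, hx⟩
  · have hxS : x ∉ S := fun hxS => by simp [C.isolate_apply_of_mem hS hxS] at hx
    rw [C.isolate_apply_of_notMem hS hxS, Sum.inl.injEq] at hx
    obtain ⟨w, hw⟩ := hC c ⟨x, hx⟩
    refine ⟨w, fun y hy => ?_⟩
    have hyS : y ∉ S := fun hyS => by simp [C.isolate_apply_of_mem hS hyS] at hy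
    rw [C.isolate_apply_of_notMem hS hyS, Sum.inl.injEq] at hy
    exact hdom w y (hw y hy) hyS
  · obtain ⟨w, hw⟩ := hnbr s hs
    refine ⟨w, fun y hy => ?_⟩
    have hyS : y ∈ S := by
      by_contra hyS
      simp [C.isolate_apply_of_notMem hS hyS] at hy
    rw [C.isolate_apply_of_mem hS hyS, Sum.inr.injEq, Subtype.mk.injEq] at hy
    exact hy ▸ hw

theorem IsDomColoring.recolorOfEquiv {G : SimpleGraph V} {C : G.Coloring α}
    (hC : IsDomColoring G C) (f : α ≃ β) : IsDomColoring G (G.recolorOfEquiv f C) := by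
  intro c ⟨x, hx⟩
  obtain ⟨w, hw⟩ := hC (f.symm c) ⟨x, by simp [← hx]⟩
  exact ⟨w, fun y hy => hw y (by simp [← hy])⟩

def DomColorable (G : SimpleGraph V) (n : ℕ) : Prop :=
  ∃ C : G.Coloring (Fin n), IsDomColoring G C

theorem IsDomColoring.domColorable [Fintype α] {G : SimpleGraph V} {C : G.Coloring α}
    (hC : IsDomColoring G C) : DomColorable G (Fintype.card α) :=
  ⟨_, hC.recolorOfEquiv (Fintype.equivFin α)⟩

theorem domChromatic_le_add {G : SimpleGraph V} {H : SimpleGraph W} {k : ℕ}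
    (hGH : ∀ n, DomColorable G n → DomColorable H (n + k))
    (hHG : ∀ n, DomColorable H n → ∃ m, DomColorable G m) :
    domChromatic H ≤ domChromatic G + k := by
  by_cases hG : ∃ n, DomColorable G n
  · exact Nat.sInf_le (hGH _ (Nat.sInf_mem hG))
  · have hH : {n | DomColorable H n} = ∅ :=
      Set.eq_empty_of_forall_notMem fun n hn => hG (hHG n hn)
    exact (congrArg sInf hH).trans_le (by simp)

end DomColoring

section DeleteEdge

variable {V : Type*} (G : SimpleGraph V) {u v : V}

theorem DomColorable.of_deleteEdges (he : G.Adj u v) {n : ℕ}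
    (h : DomColorable (G.deleteEdges {s(u, v)}) n) : DomColorable G (n + 1) := by
  classical
  obtain ⟨C, hC⟩ := h
  have hS : ∀ a b, G.Adj a b → a ∉ ({u} : Finset V) → b ∉ ({u} : Finset V) →
      (G.deleteEdges {s(u, v)}).Adj a b := by
    intro a b hab ha hb
    simp_all
  simpa using (hC.isolate hS (by simpa using ⟨v, he.symm⟩)
    fun w y hwy _ => deleteEdges_le _ hwy).domColorable

theorem DomColorable.deleteEdges (he : G.Adj u v) (hb : ¬ G.IsBridge s(u, v)) {n : ℕ}
    (h : DomColorable G n) : DomColorable (G.deleteEdges {s(u, v)}) (n + 2) := by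
  classical
  obtain ⟨C, hC⟩ := h
  have hreach : (G.deleteEdges {s(u, v)}).Reachable u v := not_not.mp hb
  obtain ⟨a, hua⟩ := hreach.exists_adj_of_ne he.ne
  obtain ⟨b, hvb⟩ := hreach.symm.exists_adj_of_ne he.ne.symm
  have hS : ∀ x y, (G.deleteEdges {s(u, v)}).Adj x y → x ∉ ({u, v} : Finset V) →
      y ∉ ({u, v} : Finset V) → G.Adj x y :=
    fun x y hxy _ _ => deleteEdges_le _ hxy
  have hnbr : ∀ s ∈ ({u, v} : Finset V), ∃ w, (G.deleteEdges {s(u, v)}).Adj w s := by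
    simp only [Finset.mem_insert, Finset.mem_singleton]
    rintro s (rfl | rfl)
    exacts [⟨a, hua.symm⟩, ⟨b, hvb.symm⟩]
  have hdom : ∀ w y, G.Adj w y → y ∉ ({u, v} : Finset V) →
      (G.deleteEdges {s(u, v)}).Adj w y := by
    intro w y hwy hy
    simp_all
  simpa [Finset.card_pair he.ne] using (hC.isolate hS hnbr hdom).domColorable

end DeleteEdge

theorem domChromatic_deleteEdge_bounds_general {V : Type*} (G : SimpleGraph V) (u v : V)
    (he : G.Adj u v) (hb : ¬ G.IsBridge s(u, v)) :
    (domChromatic G : ℤ) - 1 ≤ domChromatic (G.deleteEdges {s(u, v)}) ∧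
    domChromatic (G.deleteEdges {s(u, v)}) ≤ domChromatic G + 2 := by
  have hadd : ∀ n, DomColorable (G.deleteEdges {s(u, v)}) n → DomColorable G (n + 1) :=
    fun _ => DomColorable.of_deleteEdges G he
  have hdel : ∀ n, DomColorable G n → DomColorable (G.deleteEdges {s(u, v)}) (n + 2) :=
    fun _ => DomColorable.deleteEdges G he hb
  have hlower : domChromatic G ≤ domChromatic (G.deleteEdges {s(u, v)}) + 1 :=
    domChromatic_le_add hadd fun n h => ⟨n + 2, hdel n h⟩
  exact ⟨by omega, domChromatic_le_add hdel fun n h => ⟨n + 1, hadd n h⟩⟩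

theorem domChromatic_deleteEdge_bounds {V : Type*} (G : SimpleGraph V) (u v : V)
    (hG : G.Connected) (he : G.Adj u v) (hb : ¬ G.IsBridge s(u, v)) :
    (domChromatic G : ℤ) - 1 ≤ domChromatic (G.deleteEdges {s(u, v)}) ∧
    domChromatic (G.deleteEdges {s(u, v)}) ≤ domChromatic G + 2 :=
  domChromatic_deleteEdge_bounds_general G u v he hb
end

section
/- Let G be a connected graph and e an edge of G that is not a bridge. Then χ_dom(G − e) ≤ χ_dom(G) + 2. -/
/-!
Recolor the two endpoints `a`, `b` of `e` with two fresh colors. The new coloring refines the old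
one, so its classes are still dominated in `G`, and those avoiding `a` and `b` keep their
dominating edges in `G - e`. The singleton classes `{a}` and `{b}` are dominated in `G - e` by
any neighbor that `a` and `b` keep there, which exists because `e` is not a bridge.
Since `domChromatic G = 0` when `G` has no dominated coloring, that case needs separate care:
then `G - e` has none either, as isolating `a` in a dominated coloring of `G - e` gives one of `G`.
-/

open SimpleGraph

section

variable {V α β : Type*} {G : SimpleGraph V}

theorem IsDomColoring.of_refines {C : G.Coloring α} {D : G.Coloring β}
    (hC : IsDomColoring G C) (hDC : ∀ x y, D x = D y → C x = C y) : IsDomColoring G D := by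
  rintro _ ⟨u, rfl⟩
  obtain ⟨v, hv⟩ := hC (C u) ⟨u, rfl⟩
  exact ⟨v, fun x hx => hv x (hDC x u hx)⟩

theorem exists_isDomColoring_fin [Fintype α] {C : G.Coloring α} (hC : IsDomColoring G C) :
    ∃ D : G.Coloring (Fin (Fintype.card α)), IsDomColoring G D :=
  ⟨G.recolorOfEquiv (Fintype.equivFin α) C,
    hC.of_refines fun _ _ h => (Fintype.equivFin α).injective h⟩

theorem domChromatic_le_card [Fintype α] {C : G.Coloring α} (hC : IsDomColoring G C) :
    domChromatic G ≤ Fintype.card α :=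
  Nat.sInf_le (exists_isDomColoring_fin hC)

theorem IsDomColoring.of_deleteEdges {s : Set (Sym2 V)} {C : (G.deleteEdges s).Coloring α}
    (hC : IsDomColoring _ C) (hvalid : ∀ {x y}, G.Adj x y → C x ≠ C y) :
    IsDomColoring G (Coloring.mk C hvalid) := by
  intro c hc
  obtain ⟨v, hv⟩ := hC c hc
  exact ⟨v, fun x hx => (hv x hx).1⟩

end

namespace SimpleGraph.Coloring

variable {V α : Type*} {G : SimpleGraph V}

def isolate_s6 [DecidableEq V] (C : G.Coloring α) (a : V) : G.Coloring (Option α) :=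
  Coloring.mk (Function.update (some ∘ C) a none) fun {x y} hxy => by
    by_cases hx : x = a <;> by_cases hy : y = a
    · exact absurd (hx.trans hy.symm) hxy.ne
    all_goals simp_all [C.valid hxy]

variable [DecidableEq V] (C : G.Coloring α) {a x y : V}

theorem isolate_apply_self : C.isolate_s6 a a = none :=
  Function.update_self ..

theorem isolate_apply_of_ne (hx : x ≠ a) : C.isolate_s6 a x = some (C x) :=
  Function.update_of_ne hx ..

theorem eq_of_isolate_eq (h : C.isolate_s6 a x = C.isolate_s6 a y) : C x = C y := by
  by_cases hx : x = a <;> by_cases hy : y = a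
  · rw [hx, hy]
  all_goals simp_all [isolate_apply_self, isolate_apply_of_ne]

theorem eq_of_isolate_eq_self (h : C.isolate_s6 a x = C.isolate_s6 a a) : x = a := by
  by_contra hx
  simp [isolate_apply_self, isolate_apply_of_ne C hx] at h

end SimpleGraph.Coloring

section

variable {V α : Type*} {G : SimpleGraph V}

theorem IsDomColoring.deleteEdges_of_singleton_classes {C : G.Coloring α} {a b : V}
    (hC : IsDomColoring G C) (ha : ∀ x, C x = C a → x = a) (hb : ∀ x, C x = C b → x = b)
    (hna : ((G.deleteEdges {s(a, b)}).neighborSet a).Nonempty)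
    (hnb : ((G.deleteEdges {s(a, b)}).neighborSet b).Nonempty) :
    IsDomColoring (G.deleteEdges {s(a, b)}) (C.comp (Hom.ofLE (G.deleteEdges_le _))) := by
  rintro _ ⟨u, rfl⟩
  change ∃ v, ∀ x, C x = C u → _
  by_cases hua : u = a
  · obtain ⟨w, hw⟩ := hna
    refine ⟨w, fun x hx => ?_⟩
    rw [ha x (hua ▸ hx)]
    exact hw.symm
  by_cases hub : u = b
  · obtain ⟨w, hw⟩ := hnb
    refine ⟨w, fun x hx => ?_⟩
    rw [hb x (hub ▸ hx)]
    exact hw.symm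
  obtain ⟨v, hv⟩ := hC (C u) ⟨u, rfl⟩
  refine ⟨v, fun x hx => (deleteEdges_adj ..).mpr ⟨hv x hx, ?_⟩⟩
  have hxa : x ≠ a := fun h => hua (ha u (h ▸ hx).symm)
  have hxb : x ≠ b := fun h => hub (hb u (h ▸ hx).symm)
  simp [hxa, hxb]

theorem IsDomColoring.exists_of_deleteEdges {a b : V} (hab : a ≠ b)
    {C : (G.deleteEdges {s(a, b)}).Coloring α} (hC : IsDomColoring _ C) :
    ∃ D : G.Coloring (Option α), IsDomColoring G D := by
  classical
  have hvalid : ∀ {x y}, G.Adj x y → C.isolate_s6 a x ≠ C.isolate_s6 a y := by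
    intro x y hxy
    by_cases hxy' : s(x, y) = s(a, b)
    · have hba : C.isolate_s6 a b ≠ C.isolate_s6 a a := by
        simp [C.isolate_apply_self, C.isolate_apply_of_ne hab.symm]
      rcases Sym2.eq_iff.mp hxy' with ⟨rfl, rfl⟩ | ⟨rfl, rfl⟩
      exacts [hba.symm, hba]
    · exact (C.isolate_s6 a).valid ((deleteEdges_adj ..).mpr ⟨hxy, hxy'⟩)
  exact ⟨_, (hC.of_refines fun _ _ => C.eq_of_isolate_eq).of_deleteEdges hvalid⟩

end

theorem domChromatic_deleteEdge_le_add_two_general {V : Type*} (G : SimpleGraph V) (e : Sym2 V)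
    (he : e ∈ G.edgeSet) (hb : ¬ G.IsBridge e) :
    domChromatic (G.deleteEdges {e}) ≤ domChromatic G + 2 := by
  classical
  induction e using Sym2.ind with | _ a b => ?_
  have hab : a ≠ b := G.ne_of_adj he
  have hreach : (G.deleteEdges {s(a, b)}).Reachable a b := by simpa [isBridge_iff] using hb
  by_cases hG : {n | ∃ C : G.Coloring (Fin n), IsDomColoring G C}.Nonempty
  · obtain ⟨C, hC⟩ := Nat.sInf_mem hG
    have hD : IsDomColoring G ((C.isolate_s6 a).isolate_s6 b) :=
      hC.of_refines fun x y h => C.eq_of_isolate_eq (Coloring.eq_of_isolate_eq _ h)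
    calc domChromatic (G.deleteEdges {s(a, b)})
        ≤ Fintype.card (Option (Option (Fin (domChromatic G)))) :=
          domChromatic_le_card <| hD.deleteEdges_of_singleton_classes
            (fun _ h => C.eq_of_isolate_eq_self (Coloring.eq_of_isolate_eq _ h))
            (fun _ h => Coloring.eq_of_isolate_eq_self _ h)
            (hreach.nonempty_neighborSet_left hab) (hreach.nonempty_neighborSet_right hab)
      _ = domChromatic G + 2 := by simp
  · suffices domChromatic (G.deleteEdges {s(a, b)}) = 0 by omega
    exact Nat.sInf_eq_zero.mpr <| .inr <| Set.eq_empty_of_forall_notMem fun n ⟨C, hC⟩ => by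
      obtain ⟨D, hD⟩ := hC.exists_of_deleteEdges hab
      exact hG ⟨_, exists_isDomColoring_fin hD⟩

theorem domChromatic_deleteEdge_le_add_two {V : Type*} (G : SimpleGraph V) (e : Sym2 V)
    (hG : G.Connected) (he : e ∈ G.edgeSet) (hb : ¬ G.IsBridge e) :
    domChromatic (G.deleteEdges {e}) ≤ domChromatic G + 2 :=
  domChromatic_deleteEdge_le_add_two_general G e he hb
end

section
/- There exists a connected graph G with a non-bridge edge e such that χ_dom(G − e) = χ_dom(G) + 2 (the upper bound in the edge-removal theorem is sharp). -/
open SimpleGraph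

/-!
Add the chord `1 – 4` to the path `0 – 1 – 2 – 3 – 4 – 5`. With the chord, the even vertices
lie in the neighbourhood of `1` and the odd ones in that of `4`, so two colours suffice.
Without it every neighbourhood in the path has at most two vertices, so a dominated colouring
uses at least three classes, and an exhaustive check shows three are not enough.
-/

section DomColoring

variable {V α β : Type*} {G : SimpleGraph V}

lemma exists_isDomColoring_iff : (∃ C : G.Coloring α, IsDomColoring G C) ↔
    ∃ f : V → α, (∀ a b, G.Adj a b → f a ≠ f b) ∧
      ∀ c, (∃ u, f u = c) → ∃ v, ∀ u, f u = c → G.Adj v u :=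
  ⟨fun ⟨C, hC⟩ => ⟨C, fun _ _ => C.valid, hC⟩,
    fun ⟨f, hf, hdom⟩ => ⟨Coloring.mk f fun h => hf _ _ h, hdom⟩⟩

lemma IsDomColoring.recolorOfEmbedding {C : G.Coloring α} (hC : IsDomColoring G C)
    (f : α ↪ β) : IsDomColoring G (G.recolorOfEmbedding f C) := by
  rintro _ ⟨u, rfl⟩
  obtain ⟨v, hv⟩ := hC (C u) ⟨u, rfl⟩
  exact ⟨v, fun w hw => hv w (f.injective hw)⟩

lemma exists_isDomColoring_mono {m n : ℕ} (hmn : m ≤ n)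
    (h : ∃ C : G.Coloring (Fin m), IsDomColoring G C) :
    ∃ C : G.Coloring (Fin n), IsDomColoring G C :=
  let ⟨_, hC⟩ := h
  ⟨_, hC.recolorOfEmbedding (Fin.castLEEmb hmn)⟩

lemma domChromatic_eq_succ {n : ℕ} (h : ∃ C : G.Coloring (Fin (n + 1)), IsDomColoring G C)
    (h' : ¬ ∃ C : G.Coloring (Fin n), IsDomColoring G C) : domChromatic G = n + 1 := by
  have hmem : n + 1 ∈ {k | ∃ C : G.Coloring (Fin k), IsDomColoring G C} := h
  refine le_antisymm (Nat.sInf_le hmem) (Nat.succ_le_of_lt (not_le.mp fun hle => h' ?_))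
  exact exists_isDomColoring_mono hle (Nat.sInf_mem ⟨_, hmem⟩)

end DomColoring

lemma deleteEdges_sup_edge {V : Type*} {G : SimpleGraph V} {u v : V} (h : ¬ G.Adj u v) :
    (G ⊔ edge u v).deleteEdges {s(u, v)} = G := by
  simp [deleteEdges_sup, h]

set_option maxRecDepth 10000 in
lemma domChromatic_pathGraph_six : domChromatic (pathGraph 6) = 4 := by
  apply domChromatic_eq_succ <;> rw [exists_isDomColoring_iff]
  · refine ⟨![0, 2, 0, 1, 3, 1], ?_, ?_⟩ <;> simp only [pathGraph_adj] <;> decide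
  · simp only [pathGraph_adj]
    decide

lemma domChromatic_pathGraph_six_sup_edge : domChromatic (pathGraph 6 ⊔ edge 1 4) = 2 := by
  apply domChromatic_eq_succ
  · rw [exists_isDomColoring_iff]
    refine ⟨![0, 1, 0, 1, 0, 1], ?_, ?_⟩ <;> simp only [sup_adj, pathGraph_adj, edge_adj] <;>
      decide
  · rintro ⟨C, -⟩
    have h01 : (pathGraph 6 ⊔ edge 1 4).Adj 0 1 := Or.inl (pathGraph_adj.mpr (Or.inl rfl))
    exact C.valid h01 (Subsingleton.elim _ _)

theorem exists_deleteEdge_sharp :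
    ∃ (V : Type) (G : SimpleGraph V) (e : Sym2 V), G.Connected ∧ e ∈ G.edgeSet ∧
      ¬ G.IsBridge e ∧ domChromatic (G.deleteEdges {e}) = domChromatic G + 2 := by
  have hchord : ¬ (pathGraph 6).Adj 1 4 := by simp [pathGraph_adj]
  refine ⟨Fin 6, pathGraph 6 ⊔ edge 1 4, s(1, 4), ?_, ?_, ?_, ?_⟩
  · exact (pathGraph_connected 5).mono le_sup_left
  · exact Or.inr ((edge_adj ..).mpr ⟨Or.inl ⟨rfl, rfl⟩, by decide⟩)
  · rw [isBridge_iff, deleteEdges_sup_edge hchord]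
    exact fun h => h ((pathGraph_connected 5).preconnected 1 4)
  · rw [deleteEdges_sup_edge hchord, domChromatic_pathGraph_six,
      domChromatic_pathGraph_six_sup_edge]
end

section
/- For n ≥ 3, χ_dom(K_n) = n, and for any vertex v of K_n, the graph K_n ⊙ v is the star S_n with χ_dom(K_n ⊙ v) = 2; hence the ratio χ_dom(G)/χ_dom(G ⊙ v) can be made arbitrarily large over connected graphs G. -/
open SimpleGraph

/-- Contraction of the edge uv: delete v, and attach all of v's neighbors to u. -/
def contractEdge {V : Type*} (G : SimpleGraph V) (u v : V) : SimpleGraph {w : V // w ≠ v} where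
  Adj a b := a ≠ b ∧ (G.Adj a b ∨ (a.val = u ∧ G.Adj v b) ∨ (b.val = u ∧ G.Adj a v))
  symm := ⟨by
    rintro a b ⟨hne, h | ⟨ha, hb⟩ | ⟨hb, ha⟩⟩
    · exact ⟨hne.symm, Or.inl h.symm⟩
    · exact ⟨hne.symm, Or.inr (Or.inr ⟨ha, hb.symm⟩)⟩
    · exact ⟨hne.symm, Or.inr (Or.inl ⟨hb, ha.symm⟩)⟩⟩
  loopless := ⟨fun a => by rintro ⟨hne, -⟩; exact hne rfl⟩

/-- Contraction of a vertex v: delete v and put a clique on its (open) neighborhood. -/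
def contractVertex {V : Type*} (G : SimpleGraph V) (v : V) : SimpleGraph {w : V // w ≠ v} where
  Adj a b := a ≠ b ∧ (G.Adj a b ∨ (G.Adj v a ∧ G.Adj v b))
  symm := ⟨by
    rintro a b ⟨hne, h | ⟨ha, hb⟩⟩
    · exact ⟨hne.symm, Or.inl h.symm⟩
    · exact ⟨hne.symm, Or.inr ⟨hb, ha⟩⟩⟩
  loopless := ⟨fun a => by rintro ⟨hne, -⟩; exact hne rfl⟩

/-- G ⊙ v : remove from G all edges joining two neighbors of v. -/
def odot {V : Type*} (G : SimpleGraph V) (v : V) : SimpleGraph V where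
  Adj a b := G.Adj a b ∧ ¬(G.Adj v a ∧ G.Adj v b)
  symm := ⟨by rintro a b ⟨h, hn⟩; exact ⟨h.symm, fun ⟨x, y⟩ => hn ⟨y, x⟩⟩⟩
  loopless := ⟨fun a => by rintro ⟨h, -⟩; exact G.ne_of_adj h rfl⟩

/-!
In `K_n` every colour class is a singleton, dominated by any other vertex, so `χ_dom(K_n)` is the
chromatic number `n`. In `K_n ⊙ v` only the edges at `v` survive, leaving the star centred at `v`;
its two colour classes `{v}` and the leaves are dominated by a leaf and by `v` respectively. The
ratio `n / 2` is therefore unbounded.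
-/

section DominatedColoring

variable {V : Type*} {G : SimpleGraph V} {n : ℕ} {C : G.Coloring (Fin n)}

lemma domChromatic_le (hC : IsDomColoring G C) : domChromatic G ≤ n :=
  Nat.sInf_le ⟨C, hC⟩

lemma chromaticNumber_le_domChromatic (hC : IsDomColoring G C) :
    G.chromaticNumber ≤ domChromatic G := by
  obtain ⟨C', -⟩ := Nat.sInf_mem
    (⟨n, C, hC⟩ : {m | ∃ C : G.Coloring (Fin m), IsDomColoring G C}.Nonempty)
  simpa [domChromatic] using C'.colorable.chromaticNumber_le

lemma domChromatic_eq_of_le_chromaticNumber (hC : IsDomColoring G C)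
    (hχ : n ≤ G.chromaticNumber) : domChromatic G = n :=
  le_antisymm (domChromatic_le hC) (by exact_mod_cast hχ.trans (chromaticNumber_le_domChromatic hC))

end DominatedColoring

section CompleteGraph

variable {V : Type*}

theorem domChromatic_top [Fintype V] (hV : 1 < Fintype.card V) :
    domChromatic (⊤ : SimpleGraph V) = Fintype.card V := by
  let e := Fintype.equivFin V
  let C : (⊤ : SimpleGraph V).Coloring (Fin (Fintype.card V)) :=
    Coloring.mk e fun h => e.injective.ne h
  refine domChromatic_eq_of_le_chromaticNumber (C := C) ?_ chromaticNumber_top.ge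
  rintro _ ⟨u, rfl⟩
  obtain ⟨w, hw⟩ := Fintype.exists_ne_of_one_lt_card hV u
  exact ⟨w, fun u' hu' => (top_adj w u').2 (e.injective hu' ▸ hw)⟩

theorem odot_top (v : V) : odot ⊤ v = starGraph v := by
  ext a b
  simp only [odot, top_adj, starGraph_adj]
  tauto

theorem domChromatic_starGraph [Nontrivial V] (r : V) : domChromatic (starGraph r) = 2 := by
  classical
  obtain ⟨w, hw⟩ := exists_ne r
  let C : (starGraph r).Coloring (Fin 2) :=
    Coloring.mk (fun u => if u = r then 0 else 1) fun h => by
      rcases starGraph_adj.1 h with ⟨hne, rfl | rfl⟩ <;> simp [hne, hne.symm]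
  refine domChromatic_eq_of_le_chromaticNumber (C := C) ?_
    (two_le_chromaticNumber_of_adj (starGraph_adj.2 ⟨hw, Or.inr rfl⟩))
  rintro _ ⟨u, rfl⟩
  by_cases hu : u = r
  · subst hu
    refine ⟨w, fun u' hu' => ?_⟩
    obtain rfl : u' = u := by simpa [C, Coloring.mk] using hu'
    exact starGraph_adj.2 ⟨hw, Or.inr rfl⟩
  · refine ⟨r, fun u' hu' => starGraph_adj.2 ⟨Ne.symm ?_, Or.inl rfl⟩⟩
    simpa [C, Coloring.mk, hu] using hu'

theorem domChromatic_odot_top [Nontrivial V] (v : V) : domChromatic (odot ⊤ v) = 2 := by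
  rw [odot_top, domChromatic_starGraph]

end CompleteGraph

theorem domChromatic_complete_odot (n : ℕ) (hn : 3 ≤ n) :
    domChromatic (⊤ : SimpleGraph (Fin n)) = n ∧
    (∀ v : Fin n, domChromatic (odot (⊤ : SimpleGraph (Fin n)) v) = 2) ∧
    ∀ N : ℕ, ∃ (V : Type) (G : SimpleGraph V) (v : V), G.Connected ∧
      (N : ℚ) ≤ (domChromatic G : ℚ) / (domChromatic (odot G v) : ℚ) := by
  have hK (m : ℕ) (hm : 1 < m) : domChromatic (⊤ : SimpleGraph (Fin m)) = m := by
    simpa using domChromatic_top (V := Fin m) (by simpa using hm)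
  have hS (m : ℕ) (hm : 1 < m) (v : Fin m) : domChromatic (odot ⊤ v) = 2 :=
    have := Fin.nontrivial_iff_two_le.2 hm
    domChromatic_odot_top v
  refine ⟨hK n (by omega), hS n (by omega), fun N => ⟨Fin (2 * N + 2), ⊤, 0, connected_top, ?_⟩⟩
  rw [hK _ (by omega), hS _ (by omega), le_div_iff₀ (by norm_num)]
  push_cast
  linarith
end
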